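/- arXiv:2504.09274 — 4 statements merged into one kernel-verified Lean document; each statement's English description precedes it below -/
import Mathlib

section
/- On a 3-dimensional contact sub-Riemannian manifold, the Rumin complex is a complex: for every smooth function f, d¹_H(d⁰_H f) = 0, where d⁰_H f = (X1 f)ν1 + (X2 f)ν2 and d¹_H A = d(A + dA(X1,X2)ω). -/
/-- The Rumin complex is a complex: `d¹_H (d⁰_H f) = 0` for every smooth function `f`.
Here the frame `X1, X2, X0` acts on functions, with bracket relations
`[X1,X2] = c¹₁₂X1 + c²₁₂X2 + X0`, `[X_i,X0] = c¹_{i0}X1 + c²_{i0}X2`;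
`d⁰_H f` has coefficients `A_i = X_i f`, and `d¹_H A = d(A + dA(X1,X2)ω)` has
coefficients `β_i = X_i(dA(X1,X2)) - X0 A_i - c¹_{i0}A1 - c²_{i0}A2` (Cartan formula),
where `dA(X1,X2) = X1 A2 - X2 A1 - c¹₁₂A1 - c²₁₂A2`. The conclusion is `β1 = β2 = 0`. -/
theorem rumin_complex_is_complex {M : Type*}
    (X1 X2 X0 : (M → ℝ) → (M → ℝ))
    (c112 c212 c110 c210 c120 c220 : M → ℝ)
    (hbr12 : ∀ g : M → ℝ, X1 (X2 g) - X2 (X1 g) = c112 * X1 g + c212 * X2 g + X0 g)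
    (hbr10 : ∀ g : M → ℝ, X1 (X0 g) - X0 (X1 g) = c110 * X1 g + c210 * X2 g)
    (hbr20 : ∀ g : M → ℝ, X2 (X0 g) - X0 (X2 g) = c120 * X1 g + c220 * X2 g)
    (f A1 A2 DA β1 β2 : M → ℝ)
    (hA1 : A1 = X1 f) (hA2 : A2 = X2 f)
    (hDA : DA = X1 A2 - X2 A1 - c112 * A1 - c212 * A2)
    (hβ1 : β1 = X1 DA - X0 A1 - c110 * A1 - c210 * A2)
    (hβ2 : β2 = X2 DA - X0 A2 - c120 * A1 - c220 * A2) :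
    β1 = 0 ∧ β2 = 0 := by
  subst hA1 hA2
  have hDA' : DA = X0 f := by
    rw [hDA]; linear_combination hbr12 f
  subst hDA'
  constructor
  · rw [hβ1]; linear_combination hbr10 f
  · rw [hβ2]; linear_combination hbr20 f
end

section
/- Let M be a 3-dimensional contact sub-Riemannian manifold, A = A1ν1 + A2ν2 a horizontal magnetic potential with d_H A = β = β1ν1∧ω + β2ν2∧ω, and set Y_i = X_i + A(X_i)∂w (i=1,2), Y0 = X0 + dA(X1,X2)∂w on M × R. Then [Y1,Y2] = c¹₁₂Y1 + c²₁₂Y2 + Y0, and [Y_i, Y0] ≡ β_i ∂w modulo span{Y1,Y2} for i=1,2. In particular if (β1,β2) ≠ (0,0) at a point p, the distribution span{Y1,Y2} is bracket generating of step 3 at {p} × R. -/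
/-- Lifted vector fields on `M × ℝ` of the form `Z + a∂w` (coefficients independent of
`w`) are encoded as pairs `(Z, a)` of a vector field on `M` and a function `M → ℝ`;
their Lie bracket is `[(Z,a),(W,b)] = ([Z,W], Zb - Wa)`. -/
def llb {M E : Type*} [AddCommGroup E] [Module ℝ E]
    (Dop : (M → E) → (M → ℝ) → (M → ℝ)) (lb : (M → E) → (M → E) → (M → E))
    (Z W : (M → E) × (M → ℝ)) : (M → E) × (M → ℝ) :=
  (lb Z.1 W.1, Dop Z.1 W.2 - Dop W.1 Z.2)

/-- Multiplication of a lifted vector field by a function on `M`. -/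
def fsmul {M E : Type*} [AddCommGroup E] [Module ℝ E]
    (g : M → ℝ) (Z : (M → E) × (M → ℝ)) : (M → E) × (M → ℝ) :=
  (fun p => g p • Z.1 p, g * Z.2)

/-- Evaluation of a lifted vector field at a point, as a tangent vector in `E × ℝ`. -/
def evp {M E : Type*} (Z : (M → E) × (M → ℝ)) (p : M) : E × ℝ := (Z.1 p, Z.2 p)

/-!
The `∂w`-part of `[X + a∂w, Y + b∂w]` is `Xb - Ya`, so the structure equations of
`Y1, Y2, Y0` are those of `X1, X2, X0` plus `∂w`-parts, which the definitions of `dA(X1,X2)`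
and `β_i` cancel or leave as `β_i ∂w`. By the Leibniz rule `[Y_i,[Y1,Y2]] ≡ [Y_i,Y0] ≡ β_i ∂w`
modulo `Y1, Y2, [Y1,Y2]`, so where `(β1,β2) ≠ 0` the five fields reach `∂w`, and with it the
lifts of the frame `X1, X2, X0`. Three vectors cannot span the 4-dimensional `E × ℝ`.
-/

open Module Submodule

theorem Submodule.eq_top_of_mem_inr_of_span_fst {K V : Type*} [DivisionRing K]
    [AddCommGroup V] [Module K V] {T : Submodule K (V × K)} {S : Set V} (hS : span K S = ⊤)
    (hfst : ∀ v ∈ S, ∃ a, (v, a) ∈ T) {b : K} (hb : b ≠ 0) (hinr : ((0 : V), b) ∈ T) :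
    T = ⊤ := by
  have hker : LinearMap.ker (LinearMap.fst K V K) ≤ T := by
    rw [LinearMap.ker_fst]
    rintro _ ⟨y, rfl⟩
    have : LinearMap.inr K V K y = (y / b) • ((0 : V), b) := by
      simp [div_mul_cancel₀ y hb]
    exact this ▸ T.smul_mem _ hinr
  have hmap : T.map (LinearMap.fst K V K) = ⊤ := by
    rw [eq_top_iff, ← hS, span_le]
    intro v hv
    obtain ⟨a, ha⟩ := hfst v hv
    exact ⟨(v, a), ha, rfl⟩
  calc T = T ⊔ LinearMap.ker (LinearMap.fst K V K) := (sup_eq_left.mpr hker).symm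
    _ = ⊤ := by rw [← comap_map_eq, hmap, comap_top]

theorem Submodule.span_ne_top_of_card_lt_finrank {K V : Type*} [DivisionRing K]
    [AddCommGroup V] [Module K V] [FiniteDimensional K V] (s : Finset V)
    (hs : s.card < finrank K V) : span K (s : Set V) ≠ ⊤ := by
  intro h
  have := finrank_span_finset_le_card (R := K) s
  rw [Set.finrank, h, finrank_top] at this
  omega

theorem Submodule.span_triple_prod_ne_top {K V : Type*} [DivisionRing K] [AddCommGroup V]
    [Module K V] [FiniteDimensional K V] (hV : 3 ≤ finrank K V) (u v w : V × K) :
    span K ({u, v, w} : Set (V × K)) ≠ ⊤ := by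
  classical
  have hcard : ({u, v, w} : Finset (V × K)).card < finrank K (V × K) := by
    rw [finrank_prod, finrank_self]
    exact Finset.card_le_three.trans_lt (by omega)
  simpa using span_ne_top_of_card_lt_finrank _ hcard

theorem evp_add {M E : Type*} [Add E] (Z W : (M → E) × (M → ℝ)) (p : M) :
    evp (Z + W) p = evp Z p + evp W p := rfl

section LiftedBracket

variable {M E : Type*} [AddCommGroup E] [Module ℝ E]
  {Dop : (M → E) → (M → ℝ) → (M → ℝ)} {lb : (M → E) → (M → E) → (M → E)}

theorem llb_add_right (hDadd : ∀ Z (f g : M → ℝ), Dop Z (f + g) = Dop Z f + Dop Z g)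
    (hDZadd : ∀ Z W f, Dop (Z + W) f = Dop Z f + Dop W f)
    (hlbadd₂ : ∀ Z W U, lb Z (W + U) = lb Z W + lb Z U) (Z W U : (M → E) × (M → ℝ)) :
    llb Dop lb Z (W + U) = llb Dop lb Z W + llb Dop lb Z U := by
  refine Prod.ext (by simp [llb, hlbadd₂]) ?_
  simp only [llb, Prod.snd_add, Prod.fst_add, hDadd, hDZadd]
  abel

theorem llb_fsmul_right (hDmul : ∀ Z (f g : M → ℝ), Dop Z (f * g) = Dop Z f * g + f * Dop Z g)
    (hDZsmul : ∀ (g : M → ℝ) Z f, Dop (fun p => g p • Z p) f = g * Dop Z f)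
    (hlbsmul₂ : ∀ (g : M → ℝ) Z W,
      lb Z (fun p => g p • W p) = fun p => g p • lb Z W p + Dop Z g p • W p)
    (g : M → ℝ) (Z W : (M → E) × (M → ℝ)) :
    llb Dop lb Z (fsmul g W) = fsmul g (llb Dop lb Z W) + fsmul (Dop Z.1 g) W := by
  refine Prod.ext (funext fun p => by simp [llb, fsmul, hlbsmul₂]) ?_
  simp only [llb, fsmul, Prod.snd_add, hDmul, hDZsmul]
  ring

theorem llb_self (hlbalt : ∀ Z, lb Z Z = 0) (Z : (M → E) × (M → ℝ)) : llb Dop lb Z Z = 0 :=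
  Prod.ext (by simp [llb, hlbalt]) (by simp [llb])

theorem llb_swap (hlbalt : ∀ Z, lb Z Z = 0)
    (hlbadd₁ : ∀ Z W U, lb (Z + W) U = lb Z U + lb W U)
    (hlbadd₂ : ∀ Z W U, lb Z (W + U) = lb Z W + lb Z U) (Z W : (M → E) × (M → ℝ)) :
    llb Dop lb W Z = -llb Dop lb Z W := by
  have hsum : lb (Z.1 + W.1) (Z.1 + W.1) = 0 := hlbalt _
  rw [hlbadd₁, hlbadd₂, hlbadd₂, hlbalt, hlbalt, zero_add, add_zero] at hsum
  refine Prod.ext ?_ (by simp [llb])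
  simp only [llb, Prod.fst_neg]
  exact eq_neg_of_add_eq_zero_right hsum

theorem llb_eq_of_lb_eq {X Y U V W : M → E} {A B a b c d g : M → ℝ}
    (hlb : lb X Y = fun p => c p • U p + d p • V p + W p)
    (hg : g = Dop X B - Dop Y A - c * a - d * b) :
    llb Dop lb (X, A) (Y, B) = fsmul c (U, a) + fsmul d (V, b) + (W, g) := by
  refine Prod.ext (funext fun p => by simp [llb, fsmul, hlb]) ?_
  simp only [llb, fsmul, hg, Prod.snd_add]
  ring

theorem evp_fsmul (g : M → ℝ) (Z : (M → E) × (M → ℝ)) (p : M) :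
    evp (fsmul g Z) p = g p • evp Z p := rfl

theorem evp_fsmul_add_fsmul_add_mem_iff {T : Submodule ℝ (E × ℝ)}
    {Y1 Y2 W : (M → E) × (M → ℝ)} {p : M} (hY1 : evp Y1 p ∈ T) (hY2 : evp Y2 p ∈ T)
    (u1 u2 : M → ℝ) :
    evp (fsmul u1 Y1 + fsmul u2 Y2 + W) p ∈ T ↔ evp W p ∈ T := by
  rw [evp_add, evp_add, evp_fsmul, evp_fsmul]
  exact T.add_mem_iff_right (add_mem (T.smul_mem _ hY1) (T.smul_mem _ hY2))

theorem evp_llb_llb_mem_iff (hDadd : ∀ Z (f g : M → ℝ), Dop Z (f + g) = Dop Z f + Dop Z g)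
    (hDmul : ∀ Z (f g : M → ℝ), Dop Z (f * g) = Dop Z f * g + f * Dop Z g)
    (hDZadd : ∀ Z W f, Dop (Z + W) f = Dop Z f + Dop W f)
    (hDZsmul : ∀ (g : M → ℝ) Z f, Dop (fun p => g p • Z p) f = g * Dop Z f)
    (hlbadd₂ : ∀ Z W U, lb Z (W + U) = lb Z W + lb Z U)
    (hlbsmul₂ : ∀ (g : M → ℝ) Z W,
      lb Z (fun p => g p • W p) = fun p => g p • lb Z W p + Dop Z g p • W p)
    {T : Submodule ℝ (E × ℝ)} {Z Y1 Y2 Y0 : (M → E) × (M → ℝ)} {a b : M → ℝ} {p : M}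
    (h12 : llb Dop lb Y1 Y2 = fsmul a Y1 + fsmul b Y2 + Y0)
    (hY1 : evp Y1 p ∈ T) (hY2 : evp Y2 p ∈ T)
    (hZY1 : evp (llb Dop lb Z Y1) p ∈ T) (hZY2 : evp (llb Dop lb Z Y2) p ∈ T) :
    evp (llb Dop lb Z (llb Dop lb Y1 Y2)) p ∈ T ↔ evp (llb Dop lb Z Y0) p ∈ T := by
  rw [h12, llb_add_right hDadd hDZadd hlbadd₂, llb_add_right hDadd hDZadd hlbadd₂,
    llb_fsmul_right hDmul hDZsmul hlbsmul₂, llb_fsmul_right hDmul hDZsmul hlbsmul₂,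
    evp_add, evp_add, evp_add, evp_add, evp_fsmul, evp_fsmul, evp_fsmul, evp_fsmul]
  refine T.add_mem_iff_right (add_mem ?_ ?_) <;>
    exact add_mem (T.smul_mem _ ‹_›) (T.smul_mem _ ‹_›)

theorem span_evp_brackets_eq_top
    (hDadd : ∀ Z (f g : M → ℝ), Dop Z (f + g) = Dop Z f + Dop Z g)
    (hDmul : ∀ Z (f g : M → ℝ), Dop Z (f * g) = Dop Z f * g + f * Dop Z g)
    (hDZadd : ∀ Z W f, Dop (Z + W) f = Dop Z f + Dop W f)
    (hDZsmul : ∀ (g : M → ℝ) Z f, Dop (fun p => g p • Z p) f = g * Dop Z f)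
    (hlbalt : ∀ Z, lb Z Z = 0)
    (hlbadd₁ : ∀ Z W U, lb (Z + W) U = lb Z U + lb W U)
    (hlbadd₂ : ∀ Z W U, lb Z (W + U) = lb Z W + lb Z U)
    (hlbsmul₂ : ∀ (g : M → ℝ) Z W,
      lb Z (fun p => g p • W p) = fun p => g p • lb Z W p + Dop Z g p • W p)
    {Y1 Y2 Y0 : (M → E) × (M → ℝ)} {a b c d e f β1 β2 : M → ℝ}
    (h12 : llb Dop lb Y1 Y2 = fsmul a Y1 + fsmul b Y2 + Y0)
    (h10 : llb Dop lb Y1 Y0 = fsmul c Y1 + fsmul d Y2 + ((0 : M → E), β1))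
    (h20 : llb Dop lb Y2 Y0 = fsmul e Y1 + fsmul f Y2 + ((0 : M → E), β2))
    {p : M} (hframe : span ℝ ({Y1.1 p, Y2.1 p, Y0.1 p} : Set E) = ⊤)
    (hβ : (β1 p, β2 p) ≠ (0, 0)) :
    span ℝ ({evp Y1 p, evp Y2 p, evp (llb Dop lb Y1 Y2) p,
      evp (llb Dop lb Y1 (llb Dop lb Y1 Y2)) p,
      evp (llb Dop lb Y2 (llb Dop lb Y1 Y2)) p} : Set (E × ℝ)) = ⊤ := by
  set T := span ℝ ({evp Y1 p, evp Y2 p, evp (llb Dop lb Y1 Y2) p,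
      evp (llb Dop lb Y1 (llb Dop lb Y1 Y2)) p,
      evp (llb Dop lb Y2 (llb Dop lb Y1 Y2)) p} : Set (E × ℝ))
  have hY1 : evp Y1 p ∈ T := subset_span (by simp)
  have hY2 : evp Y2 p ∈ T := subset_span (by simp)
  have hY12 : evp (llb Dop lb Y1 Y2) p ∈ T := subset_span (by simp)
  have hY112 : evp (llb Dop lb Y1 (llb Dop lb Y1 Y2)) p ∈ T := subset_span (by simp)
  have hY212 : evp (llb Dop lb Y2 (llb Dop lb Y1 Y2)) p ∈ T := subset_span (by simp)
  have hreduce Z := evp_llb_llb_mem_iff (Z := Z) hDadd hDmul hDZadd hDZsmul hlbadd₂ hlbsmul₂ h12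
    hY1 hY2
  have hY0 : evp Y0 p ∈ T := (evp_fsmul_add_fsmul_add_mem_iff hY1 hY2 a b).mp (h12 ▸ hY12)
  have hβ1 : ((0 : E), β1 p) ∈ T := by
    have h := (hreduce _ (by rw [llb_self hlbalt]; exact T.zero_mem) hY12).mp hY112
    rw [h10] at h
    exact (evp_fsmul_add_fsmul_add_mem_iff hY1 hY2 c d).mp h
  have hβ2 : ((0 : E), β2 p) ∈ T := by
    have h := (hreduce _ (by rw [llb_swap hlbalt hlbadd₁ hlbadd₂]; exact T.neg_mem hY12)
      (by rw [llb_self hlbalt]; exact T.zero_mem)).mp hY212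
    rw [h20] at h
    exact (evp_fsmul_add_fsmul_add_mem_iff hY1 hY2 e f).mp h
  obtain ⟨β, hβ0, hβT⟩ : ∃ β ≠ 0, ((0 : E), β) ∈ T := by
    by_cases h : β1 p = 0
    · exact ⟨β2 p, fun h' => hβ (by rw [h, h']), hβ2⟩
    · exact ⟨β1 p, h, hβ1⟩
  refine eq_top_of_mem_inr_of_span_fst hframe ?_ hβ0 hβT
  rintro v (rfl | rfl | rfl)
  exacts [⟨_, hY1⟩, ⟨_, hY2⟩, ⟨_, hY0⟩]

end LiftedBracket

theorem lifted_structure_step_three_general {M E : Type*} [AddCommGroup E] [Module ℝ E]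
    (Dop : (M → E) → (M → ℝ) → (M → ℝ))
    (lb : (M → E) → (M → E) → (M → E))
    (hDadd : ∀ Z (f g : M → ℝ), Dop Z (f + g) = Dop Z f + Dop Z g)
    (hDmul : ∀ Z (f g : M → ℝ), Dop Z (f * g) = Dop Z f * g + f * Dop Z g)
    (hDZadd : ∀ Z W f, Dop (Z + W) f = Dop Z f + Dop W f)
    (hDZsmul : ∀ (g : M → ℝ) Z f, Dop (fun p => g p • Z p) f = g * Dop Z f)
    (hlbalt : ∀ Z, lb Z Z = 0)
    (hlbadd₁ : ∀ Z W U, lb (Z + W) U = lb Z U + lb W U)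
    (hlbadd₂ : ∀ Z W U, lb Z (W + U) = lb Z W + lb Z U)
    (hlbsmul₂ : ∀ (g : M → ℝ) Z W,
      lb Z (fun p => g p • W p) = fun p => g p • lb Z W p + Dop Z g p • W p)
    (X1 X2 X0 : M → E)
    (c112 c212 c110 c210 c120 c220 A1 A2 DA β1 β2 : M → ℝ)
    (hbr12 : lb X1 X2 = fun p => c112 p • X1 p + c212 p • X2 p + X0 p)
    (hbr10 : lb X1 X0 = fun p => c110 p • X1 p + c210 p • X2 p)
    (hbr20 : lb X2 X0 = fun p => c120 p • X1 p + c220 p • X2 p)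
    (hframe : ∀ p : M, Submodule.span ℝ ({X1 p, X2 p, X0 p} : Set E) = ⊤)
    (hindep : ∀ p : M, LinearIndependent ℝ ![X1 p, X2 p, X0 p])
    (hDA : DA = Dop X1 A2 - Dop X2 A1 - c112 * A1 - c212 * A2)
    (hβ1 : β1 = Dop X1 DA - Dop X0 A1 - c110 * A1 - c210 * A2)
    (hβ2 : β2 = Dop X2 DA - Dop X0 A2 - c120 * A1 - c220 * A2) :
    llb Dop lb (X1, A1) (X2, A2)
      = fsmul c112 (X1, A1) + fsmul c212 (X2, A2) + (X0, DA)
    ∧ (∃ u1 u2 : M → ℝ, llb Dop lb (X1, A1) (X0, DA)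
      = fsmul u1 (X1, A1) + fsmul u2 (X2, A2) + ((0 : M → E), β1))
    ∧ (∃ u1 u2 : M → ℝ, llb Dop lb (X2, A2) (X0, DA)
      = fsmul u1 (X1, A1) + fsmul u2 (X2, A2) + ((0 : M → E), β2))
    ∧ (∀ p : M, (β1 p, β2 p) ≠ (0, 0) →
        Submodule.span ℝ
          ({evp (X1, A1) p, evp (X2, A2) p,
            evp (llb Dop lb (X1, A1) (X2, A2)) p,
            evp (llb Dop lb (X1, A1) (llb Dop lb (X1, A1) (X2, A2))) p,
            evp (llb Dop lb (X2, A2) (llb Dop lb (X1, A1) (X2, A2))) p} : Set (E × ℝ))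
          = ⊤
        ∧ Submodule.span ℝ
          ({evp (X1, A1) p, evp (X2, A2) p,
            evp (llb Dop lb (X1, A1) (X2, A2)) p} : Set (E × ℝ)) ≠ ⊤) := by
  have hY12 : llb Dop lb (X1, A1) (X2, A2)
      = fsmul c112 (X1, A1) + fsmul c212 (X2, A2) + (X0, DA) := llb_eq_of_lb_eq hbr12 hDA
  have hY10 : llb Dop lb (X1, A1) (X0, DA)
      = fsmul c110 (X1, A1) + fsmul c210 (X2, A2) + ((0 : M → E), β1) :=
    llb_eq_of_lb_eq (by simpa using hbr10) hβ1
  have hY20 : llb Dop lb (X2, A2) (X0, DA)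
      = fsmul c120 (X1, A1) + fsmul c220 (X2, A2) + ((0 : M → E), β2) :=
    llb_eq_of_lb_eq (by simpa using hbr20) hβ2
  refine ⟨hY12, ⟨_, _, hY10⟩, ⟨_, _, hY20⟩, fun p hβ => ⟨?_, ?_⟩⟩
  · exact span_evp_brackets_eq_top hDadd hDmul hDZadd hDZsmul hlbalt hlbadd₁ hlbadd₂ hlbsmul₂
      hY12 hY10 hY20 (hframe p) hβ
  · have : FiniteDimensional ℝ E := ⟨hframe p ▸ fg_span (Set.toFinite _)⟩
    have hdim : 3 ≤ finrank ℝ E := by simpa using (hindep p).fintype_card_le_finrank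
    exact span_triple_prod_ne_top hdim _ _ _

/-- Let `M` be a 3-dimensional contact sub-Riemannian manifold with frame `X1, X2, X0`
(vector fields valued in the tangent model `E`, acting on functions via `Dop` and with
Lie bracket `lb`), structure functions `c^k_{ij}`, horizontal potential `A = A1ν1+A2ν2`
with `d_H A = β1ν1∧ω + β2ν2∧ω`, and lifted fields `Y_i = X_i + A_i∂w`,
`Y0 = X0 + dA(X1,X2)∂w` on `M × ℝ`. Then `[Y1,Y2] = c¹₁₂Y1 + c²₁₂Y2 + Y0`,
`[Y_i,Y0] ≡ β_i∂w mod span{Y1,Y2}`, and wherever `(β1,β2) ≠ (0,0)` the distribution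
`span{Y1,Y2}` is bracket generating of step 3 on `{p} × ℝ`. -/
theorem lifted_structure_step_three {M E : Type*} [AddCommGroup E] [Module ℝ E]
    (Dop : (M → E) → (M → ℝ) → (M → ℝ))
    (lb : (M → E) → (M → E) → (M → E))
    (hDadd : ∀ Z (f g : M → ℝ), Dop Z (f + g) = Dop Z f + Dop Z g)
    (hDmul : ∀ Z (f g : M → ℝ), Dop Z (f * g) = Dop Z f * g + f * Dop Z g)
    (hDZadd : ∀ Z W f, Dop (Z + W) f = Dop Z f + Dop W f)
    (hDZsmul : ∀ (g : M → ℝ) Z f, Dop (fun p => g p • Z p) f = g * Dop Z f)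
    (hlbalt : ∀ Z, lb Z Z = 0)
    (hlbadd₁ : ∀ Z W U, lb (Z + W) U = lb Z U + lb W U)
    (hlbadd₂ : ∀ Z W U, lb Z (W + U) = lb Z W + lb Z U)
    (hlbsmul₁ : ∀ (g : M → ℝ) Z W,
      lb (fun p => g p • Z p) W = fun p => g p • lb Z W p - Dop W g p • Z p)
    (hlbsmul₂ : ∀ (g : M → ℝ) Z W,
      lb Z (fun p => g p • W p) = fun p => g p • lb Z W p + Dop Z g p • W p)
    (X1 X2 X0 : M → E)
    (c112 c212 c110 c210 c120 c220 A1 A2 DA β1 β2 : M → ℝ)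
    (hbr12 : lb X1 X2 = fun p => c112 p • X1 p + c212 p • X2 p + X0 p)
    (hbr10 : lb X1 X0 = fun p => c110 p • X1 p + c210 p • X2 p)
    (hbr20 : lb X2 X0 = fun p => c120 p • X1 p + c220 p • X2 p)
    (hframe : ∀ p : M, Submodule.span ℝ ({X1 p, X2 p, X0 p} : Set E) = ⊤)
    (hindep : ∀ p : M, LinearIndependent ℝ ![X1 p, X2 p, X0 p])
    (hDA : DA = Dop X1 A2 - Dop X2 A1 - c112 * A1 - c212 * A2)
    (hβ1 : β1 = Dop X1 DA - Dop X0 A1 - c110 * A1 - c210 * A2)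
    (hβ2 : β2 = Dop X2 DA - Dop X0 A2 - c120 * A1 - c220 * A2) :
    llb Dop lb (X1, A1) (X2, A2)
      = fsmul c112 (X1, A1) + fsmul c212 (X2, A2) + (X0, DA)
    ∧ (∃ u1 u2 : M → ℝ, llb Dop lb (X1, A1) (X0, DA)
      = fsmul u1 (X1, A1) + fsmul u2 (X2, A2) + ((0 : M → E), β1))
    ∧ (∃ u1 u2 : M → ℝ, llb Dop lb (X2, A2) (X0, DA)
      = fsmul u1 (X1, A1) + fsmul u2 (X2, A2) + ((0 : M → E), β2))
    ∧ (∀ p : M, (β1 p, β2 p) ≠ (0, 0) →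
        Submodule.span ℝ
          ({evp (X1, A1) p, evp (X2, A2) p,
            evp (llb Dop lb (X1, A1) (X2, A2)) p,
            evp (llb Dop lb (X1, A1) (llb Dop lb (X1, A1) (X2, A2))) p,
            evp (llb Dop lb (X2, A2) (llb Dop lb (X1, A1) (X2, A2))) p} : Set (E × ℝ))
          = ⊤
        ∧ Submodule.span ℝ
          ({evp (X1, A1) p, evp (X2, A2) p,
            evp (llb Dop lb (X1, A1) (X2, A2)) p} : Set (E × ℝ)) ≠ ⊤) :=
  lifted_structure_step_three_general Dop lb hDadd hDmul hDZadd hDZsmul hlbalt hlbadd₁ hlbadd₂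
    hlbsmul₂ X1 X2 X0 c112 c212 c110 c210 c120 c220 A1 A2 DA β1 β2 hbr12 hbr10 hbr20 hframe hindep
    hDA hβ1 hβ2
end

section
/- Let β = (f^n/n!)(b1 ν1 + b2 ν2) ∧ ω be a closed horizontal 2-form on a 3-dimensional contact sub-Riemannian manifold, where n ≥ 1, b1² + b2² = 1, and f is a smooth submersion. Setting V2 = -b2 X1 + b1 X2, the closure condition implies V2 f + (f/n) div_μ(V2) = 0 on all of M; in particular V2 f = 0 on Σ = f⁻¹(0), i.e. V2 is tangent to the zero locus Σ. -/
private lemma deriv_pow_succ {M : Type*} (X : (M → ℝ) → (M → ℝ))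
    (hmul : ∀ f g : M → ℝ, X (f * g) = X f * g + f * X g)
    (f : M → ℝ) :
    ∀ m : ℕ, X (fun q => f q ^ (m + 1)) = fun q => ((m : ℝ) + 1) * f q ^ m * X f q := by
  intro m
  induction m with
  | zero =>
      have h : (fun q => f q ^ 1) = f := by funext q; exact pow_one _
      rw [h]; funext q; simp
  | succ k ih =>
      have h : (fun q => f q ^ (k + 2)) = f * (fun q => f q ^ (k + 1)) := by
        funext q
        show f q ^ (k + 2) = f q * f q ^ (k + 1)
        ring
      rw [h, hmul, ih]
      funext q
      simp only [Pi.add_apply, Pi.mul_apply]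
      push_cast
      ring

private lemma deriv_div_fac {M : Type*} (X : (M → ℝ) → (M → ℝ))
    (hmul : ∀ f g : M → ℝ, X (f * g) = X f * g + f * X g)
    (hconst : ∀ c : ℝ, X (fun _ => c) = 0)
    (f b : M → ℝ) (m : ℕ) (p : M) :
    X (fun q => f q ^ (m + 1) / ((m + 1).factorial : ℝ) * b q) p
      = (((m : ℝ) + 1) * f p ^ m * X f p) / ((m + 1).factorial : ℝ) * b p
        + f p ^ (m + 1) / ((m + 1).factorial : ℝ) * X b p := by
  have e : (fun q => f q ^ (m + 1) / ((m + 1).factorial : ℝ) * b q)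
      = ((fun q => f q ^ (m + 1)) * (fun _ => (((m + 1).factorial : ℝ))⁻¹)) * b := by
    funext q
    show f q ^ (m + 1) / ((m + 1).factorial : ℝ) * b q
        = f q ^ (m + 1) * (((m + 1).factorial : ℝ))⁻¹ * b q
    rw [div_eq_mul_inv]
  rw [e, hmul, hmul, hconst, deriv_pow_succ X hmul f m]
  show ((((m : ℝ) + 1) * f p ^ m * X f p) * (((m + 1).factorial : ℝ))⁻¹
        + f p ^ (m + 1) * (0 : M → ℝ) p) * b p
      + f p ^ (m + 1) * (((m + 1).factorial : ℝ))⁻¹ * X b p = _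
  simp [div_eq_mul_inv]


/-- Let `β = (fⁿ/n!)(b1 ν1 + b2 ν2) ∧ ω` be a closed horizontal 2-form on a
3-dimensional contact sub-Riemannian manifold `M`, where `n ≥ 1`, `b1² + b2² = 1`,
and `f` is a smooth submersion. With `V2 = -b2 X1 + b1 X2`, the closure condition
`div_μ(-β2X1 + β1X2) = 0` (where `β1 = (fⁿ/n!)b1`, `β2 = (fⁿ/n!)b2`,
`div_μ(X1) = -c²₁₂`, `div_μ(X2) = c¹₁₂, and `div_μ(gX) = Xg + g div_μ(X)`) implies
`V2 f + (f/n) div_μ(V2) = 0` on all of `M`; in particular `V2 f = 0` on `Σ = f⁻¹(0)`,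
i.e. `V2` is tangent to the zero locus `Σ`. -/
theorem closure_implies_tangency {M : Type*} [TopologicalSpace M]
    (X1 X2 X0 : (M → ℝ) → (M → ℝ))
    (hX1add : ∀ f g : M → ℝ, X1 (f + g) = X1 f + X1 g)
    (hX1mul : ∀ f g : M → ℝ, X1 (f * g) = X1 f * g + f * X1 g)
    (hX1const : ∀ c : ℝ, X1 (fun _ => c) = 0)
    (hX2add : ∀ f g : M → ℝ, X2 (f + g) = X2 f + X2 g)
    (hX2mul : ∀ f g : M → ℝ, X2 (f * g) = X2 f * g + f * X2 g)
    (hX2const : ∀ c : ℝ, X2 (fun _ => c) = 0)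
    (c112 c212 : M → ℝ)
    (f b1 b2 : M → ℝ) (n : ℕ) (hn : 1 ≤ n)
    (hb : ∀ p : M, b1 p ^ 2 + b2 p ^ 2 = 1)
    -- `f` is a submersion: its differential never vanishes
    (hsubm : ∀ p : M, ¬(X1 f p = 0 ∧ X2 f p = 0 ∧ X0 f p = 0))
    (hdense : Dense {p : M | f p ≠ 0})
    (V2f divV2 G : M → ℝ)
    (hV2f : ∀ p : M, V2f p = -(b2 p) * X1 f p + b1 p * X2 f p)
    (hdivV2 : ∀ p : M, divV2 p = -(X1 b2 p) + b2 p * c212 p + X2 b1 p + b1 p * c112 p)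
    (hG : ∀ p : M, G p = V2f p + f p / n * divV2 p)
    (hGcont : Continuous G)
    -- the closure condition `div_μ(-β2X1 + β1X2) = 0` with `β_i = (fⁿ/n!) b_i`
    (hclosed : ∀ p : M,
      -(X1 (fun q => f q ^ n / (n.factorial : ℝ) * b2 q) p)
        + (f p ^ n / (n.factorial : ℝ) * b2 p) * c212 p
        + X2 (fun q => f q ^ n / (n.factorial : ℝ) * b1 q) p
        + (f p ^ n / (n.factorial : ℝ) * b1 p) * c112 p = 0) :
    (∀ p : M, V2f p + f p / n * divV2 p = 0) ∧
    (∀ p : M, f p = 0 → V2f p = 0) := by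
  obtain ⟨m, rfl⟩ : ∃ m, n = m + 1 := ⟨n - 1, by omega⟩
  have hfac : (((m + 1).factorial : ℕ) : ℝ) ≠ 0 :=
    Nat.cast_ne_zero.mpr (Nat.factorial_ne_zero _)
  have hcoe : ((m : ℝ) + 1) ≠ 0 := by positivity
  -- G vanishes where f ≠ 0
  have eqon : ∀ p : M, f p ≠ 0 → G p = 0 := by
    intro p hfp
    have hc := hclosed p
    rw [deriv_div_fac X1 hX1mul hX1const f b2 m p,
        deriv_div_fac X2 hX2mul hX2const f b1 m p] at hc
    field_simp at hc
    have h3 : f p ^ m * (((m : ℝ) + 1) * V2f p + f p * divV2 p) = 0 := by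
      rw [hV2f p, hdivV2 p]
      linear_combination hc
    have h4 : ((m : ℝ) + 1) * V2f p + f p * divV2 p = 0 :=
      (mul_eq_zero.mp h3).resolve_left (pow_ne_zero m hfp)
    rw [hG p]
    push_cast
    field_simp
    linear_combination h4
  have hGzero : G = fun _ => 0 :=
    Continuous.ext_on hdense hGcont continuous_const (fun p hp => eqon p hp)
  have hG0 : ∀ p : M, G p = 0 := fun p => congrFun hGzero p
  constructor
  · intro p
    have h := hG0 p
    rw [hG p] at h
    exact h
  · intro p hfp
    have h := hG0 p
    rw [hG p, hfp] at h
    simpa using h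
end

section
/- Under the hypotheses above (β = (f^n/n!)η1∧ω closed, f a submersion, V1, V2 orthonormal frame with [V1,V2] = a¹V1 + a²V2 + X0), at any point p where f(p) = 0 and V1f(p) = 0 (hence also V2f(p) = 0), one has V1V2f(p) = 0 and V2V1f(p) = -X0f(p) ≠ 0; consequently the map Φ = (f, V1f) : M → R² has differential of rank 2 at p, and the characteristic set Char(Σ) = Φ⁻¹(0) is a 1-dimensional smooth submanifold. -/
/-- In the setting of a closed magnetic field `β = (fⁿ/n!)η1∧ω` on a 3-dimensional
contact sub-Riemannian manifold with adapted orthonormal frame `V1, V2` and Reeb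
field `X0`, with `[V1,V2] = a¹V1 + a²V2 + X0` and the closure identity
`V2 f = -(f/n) div_μ(V2)`: at any characteristic point `p` of `Σ = f⁻¹(0)`
(i.e. `f(p) = 0` and `V1f(p) = 0`, hence also `V2f(p) = 0`) one has
`V1V2f(p) = 0`, `V2V1f(p) = -X0f(p) ≠ 0`, and the differential of
`Φ = (f, V1f) : M → ℝ²` has rank 2 there; consequently the characteristic set
`Char(Σ) = Φ⁻¹(0)` is a 1-dimensional smooth submanifold (rank-2 regularity of `Φ`
holding at each of its points). -/
theorem characteristic_set_regularity {M : Type*}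
    (V1 V2 X0 : (M → ℝ) → (M → ℝ))
    (hV1add : ∀ f g : M → ℝ, V1 (f + g) = V1 f + V1 g)
    (hV1mul : ∀ f g : M → ℝ, V1 (f * g) = V1 f * g + f * V1 g)
    (hV1const : ∀ c : ℝ, V1 (fun _ => c) = 0)
    (a1 a2 : M → ℝ)
    (hbr : ∀ g : M → ℝ, V1 (V2 g) - V2 (V1 g) = a1 * V1 g + a2 * V2 g + X0 g)
    (f dv : M → ℝ) (n : ℕ) (hn : 1 ≤ n)
    -- closure identity `V2 f = -(f/n) div_μ(V2)`, with `dv = div_μ(V2)`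
    (hclos : V2 f = fun p => -(f p / n) * dv p)
    -- `f` is a submersion
    (hsubm : ∀ p : M, ¬(V1 f p = 0 ∧ V2 f p = 0 ∧ X0 f p = 0)) :
    ∀ p : M, f p = 0 → V1 f p = 0 →
      V2 f p = 0 ∧
      V1 (V2 f) p = 0 ∧
      V2 (V1 f) p = -X0 f p ∧
      X0 f p ≠ 0 ∧
      (!![V1 f p, V2 f p, X0 f p;
          V1 (V1 f) p, V2 (V1 f) p, X0 (V1 f) p] : Matrix (Fin 2) (Fin 3) ℝ).rank = 2 := by
  intro p hf h1
  have c := X0 f p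
  -- V2 f p = 0
  have h2 : V2 f p = 0 := by rw [hclos]; simp [hf]
  -- V1 (V2 f) p = 0
  have hfac : V2 f = f * (fun q => -(dv q) / n) := by
    funext q; rw [hclos]; simp; ring
  have h12 : V1 (V2 f) p = 0 := by
    rw [hfac, hV1mul]
    simp [hf, h1]
  -- V2 (V1 f) p = -X0 f p
  have hbrp := congrFun (hbr f) p
  simp only [Pi.sub_apply, Pi.add_apply, Pi.mul_apply] at hbrp
  have h21 : V2 (V1 f) p = -X0 f p := by
    rw [h1, h2] at hbrp
    linarith [hbrp]
  have hc : X0 f p ≠ 0 := by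
    intro h0
    exact hsubm p ⟨h1, h2, h0⟩
  refine ⟨h2, h12, h21, hc, ?_⟩
  set A : Matrix (Fin 2) (Fin 3) ℝ :=
    !![V1 f p, V2 f p, X0 f p; V1 (V1 f) p, V2 (V1 f) p, X0 (V1 f) p] with hA
  have hsurj : Function.Surjective A.mulVecLin := by
    intro y
    refine ⟨![0, (X0 (V1 f) p * (y 0 / X0 f p) - y 1) / X0 f p, y 0 / X0 f p], ?_⟩
    funext i
    fin_cases i <;>
      simp [hA, Matrix.mulVecLin, Matrix.mulVec, dotProduct, Fin.sum_univ_three,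
        h1, h2, h21] <;> field_simp <;> ring
  rw [Matrix.rank, LinearMap.range_eq_top.mpr hsurj]
  simp
end
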